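/- Let n ≥ 1 and for N ∈ ℕ let σ_N denote the sum of the N largest values of (1 + ‖x‖²)^{−n/2} over x ∈ ℤⁿ (counted with multiplicity). Then lim_{N→∞} σ_N / log(N+1) = Ω_n / n, where Ω_n = 2π^{n/2}/Γ(n/2). (This computes the Dixmier trace of (1+Δ)^{−n/2} on the flat n-torus.) -/

import Mathlib

/-!
Enumerate `ℤⁿ` so that `q k = ‖e k‖²` increases. Every lattice point with `‖x‖² < q k` occurs
before position `k`, and the first `k + 1` points all satisfy `‖x‖² ≤ q k`, so `k` is squeezed
between the numbers of lattice points in two balls of squared radius about `q k`. By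
lattice-point counting, a ball of squared radius `t` contains `~ vol(Bⁿ) t^{n/2}` points, hence
`(k + 1) (1 + q k)^{-n/2} → vol(Bⁿ) = Ω_n / n`. A sequence asymptotic to `c / (k + 1)` has
partial sums asymptotic to `c log N`.
-/

open Filter Topology MeasureTheory Real Submodule Module Asymptotics

lemma tendsto_log_natCast_add_one_atTop :
    Tendsto (fun N : ℕ => log ((N : ℝ) + 1)) atTop atTop :=
  tendsto_log_atTop.comp (tendsto_atTop_add_const_right _ 1 tendsto_natCast_atTop_atTop)

lemma isEquivalent_harmonic_log :
    (fun N : ℕ => (harmonic N : ℝ)) ~[atTop] fun N => log ((N : ℝ) + 1) :=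
  (tendsto_harmonic_sub_log_add_one.isBigO_one ℝ).trans_isLittleO <|
    (isLittleO_one_left_iff ℝ).2 <| tendsto_norm_atTop_atTop.comp tendsto_log_natCast_add_one_atTop

theorem Filter.Tendsto.sum_div_succ_div_log {v : ℕ → ℝ} {L : ℝ}
    (hv : Tendsto v atTop (𝓝 L)) :
    Tendsto (fun N : ℕ => (∑ k ∈ Finset.range N, v k / ((k : ℝ) + 1)) / Real.log ((N : ℝ) + 1))
      atTop (𝓝 L) := by
  have hharmonic (N : ℕ) : (harmonic N : ℝ) = ∑ k ∈ Finset.range N, ((k : ℝ) + 1)⁻¹ := by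
    simp [harmonic]
  have hsmall : (fun k : ℕ => (v k - L) / ((k : ℝ) + 1)) =o[atTop] fun k => ((k : ℝ) + 1)⁻¹ := by
    simpa [div_eq_mul_inv] using
      ((isLittleO_one_iff ℝ).2 (tendsto_sub_nhds_zero_iff.2 hv)).mul_isBigO
        (isBigO_refl (fun k : ℕ => ((k : ℝ) + 1)⁻¹) atTop)
  have hsum : (fun N => ∑ k ∈ Finset.range N, (v k - L) / ((k : ℝ) + 1))
      =o[atTop] fun N => Real.log ((N : ℝ) + 1) := by
    refine (hsmall.sum_range (fun k => by positivity) ?_).trans_isBigO ?_ <;>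
      simp only [← hharmonic]
    · exact tendsto_atTop_mono (fun N => by simpa using log_add_one_le_harmonic N)
        tendsto_log_natCast_add_one_atTop
    · exact isEquivalent_harmonic_log.isBigO
  have herr : (fun N : ℕ =>
        ∑ k ∈ Finset.range N, v k / ((k : ℝ) + 1) - L * Real.log ((N : ℝ) + 1))
      =o[atTop] fun N => Real.log ((N : ℝ) + 1) := by
    refine (hsum.add (isEquivalent_harmonic_log.isLittleO.const_mul_left L)).congr_left fun N => ?_
    simp only [Pi.sub_apply, hharmonic, div_eq_mul_inv, sub_mul, Finset.sum_sub_distrib]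
    rw [mul_sub, Finset.mul_sum]
    ring
  have hlim := herr.tendsto_div_nhds_zero.add_const L
  rw [zero_add] at hlim
  refine hlim.congr' ?_
  filter_upwards [tendsto_log_natCast_add_one_atTop.eventually_gt_atTop 0] with N hN
  field_simp
  ring

section Enumeration

variable {α : Type*} {g : α → ℝ} (e : ℕ ≃ α)

lemma Equiv.natCard_le_of_lt_apply (hg : Monotone (g ∘ e)) {t : ℝ} {k : ℕ}
    (ht : t < g (e k)) : Nat.card {x // g x ≤ t} ≤ k := by
  have hsub : {x | g x ≤ t} ⊆ e '' (Finset.range k : Set ℕ) := fun x hx => by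
    refine ⟨e.symm x, Finset.mem_range.2 ?_, e.apply_symm_apply x⟩
    by_contra! hk
    have := hg hk
    simp only [Function.comp_apply, Equiv.apply_symm_apply] at this
    exact (ht.trans_le this).not_ge hx
  calc Nat.card {x // g x ≤ t} ≤ Nat.card (e '' (Finset.range k : Set ℕ)) :=
        Nat.card_mono ((Finset.range k).finite_toSet.image e) hsub
    _ = k := by rw [Nat.card_image_of_injective e.injective]; simp

lemma Equiv.succ_le_natCard_le_apply (hg : Monotone (g ∘ e)) (hfin : ∀ t, {x | g x ≤ t}.Finite)
    (k : ℕ) : k + 1 ≤ Nat.card {x // g x ≤ g (e k)} := by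
  have hsub : e '' (Finset.range (k + 1) : Set ℕ) ⊆ {x | g x ≤ g (e k)} := by
    rintro _ ⟨j, hj, rfl⟩
    exact hg (Nat.lt_succ_iff.1 (Finset.mem_range.1 hj))
  calc k + 1 = Nat.card (e '' (Finset.range (k + 1) : Set ℕ)) := by
        rw [Nat.card_image_of_injective e.injective]; simp
    _ ≤ Nat.card {x // g x ≤ g (e k)} := Nat.card_mono (hfin _) hsub

lemma Equiv.tendsto_comp_atTop_of_finite (hfin : ∀ t, {x | g x ≤ t}.Finite) :
    Tendsto (g ∘ e) atTop atTop := by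
  rw [← Nat.cofinite_eq_atTop]
  refine Tendsto.comp (tendsto_atTop.2 fun t => ?_) e.injective.tendsto_cofinite
  exact eventually_cofinite.2 ((hfin t).subset fun x hx => (not_le.1 hx).le)

end Enumeration

lemma pow_le_rpow_half_iff {a t : ℝ} (ha : 0 ≤ a) (ht : 0 ≤ t) {d : ℕ} (hd : d ≠ 0) :
    a ^ d ≤ t ^ ((d : ℝ) / 2) ↔ a ^ 2 ≤ t := by
  have : a ^ d = (a ^ 2) ^ ((d : ℝ) / 2) := by
    rw [← rpow_natCast, ← rpow_natCast a 2, ← rpow_mul ha]; ring_nf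
  rw [this, rpow_le_rpow_iff (by positivity) ht (by positivity)]

section LatticePoints

variable {ι : Type*} [Fintype ι]

abbrev intLattice (ι : Type*) [Fintype ι] : Submodule ℤ (EuclideanSpace ℝ ι) :=
  span ℤ (Set.range (EuclideanSpace.basisFun ι ℝ).toBasis)

def intPoint (z : ι → ℤ) : EuclideanSpace ℝ ι := WithLp.toLp 2 (fun i => (z i : ℝ))

lemma range_intPoint : Set.range (intPoint (ι := ι)) = intLattice ι := by
  ext x
  simp only [Set.mem_range, SetLike.mem_coe, Basis.mem_span_iff_repr_mem, intPoint,
    algebraMap_int_eq, Int.coe_castRingHom, OrthonormalBasis.coe_toBasis_repr_apply,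
    EuclideanSpace.basisFun_repr]
  constructor
  · rintro ⟨z, rfl⟩ i
    exact ⟨z i, rfl⟩
  · intro h
    choose z hz using h
    exact ⟨z, by ext i; simp [hz]⟩

lemma covolume_intLattice : ZLattice.covolume (intLattice ι) = 1 := by
  rw [ZLattice.covolume_eq_measure_fundamentalDomain _ volume
    (ZSpan.isAddFundamentalDomain _ volume),
    measureReal_congr (ZSpan.fundamentalDomain_ae_parallelepiped _ volume)]
  simp only [OrthonormalBasis.coe_toBasis, measureReal_def,
    OrthonormalBasis.volume_parallelepiped, ENNReal.toReal_one]

omit [Fintype ι] in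
lemma intPoint_injective : Function.Injective (intPoint (ι := ι)) := by
  intro z w h
  funext i
  simpa [intPoint] using congrFun (congrArg WithLp.ofLp h) i

lemma norm_intPoint_sq (z : ι → ℤ) : ‖intPoint z‖ ^ 2 = ∑ i, (z i : ℝ) ^ 2 := by
  simp only [intPoint, EuclideanSpace.norm_sq_eq, norm_eq_abs, sq_abs]

noncomputable def latticeCount (ι : Type*) [Fintype ι] (t : ℝ) : ℕ :=
  Nat.card {z : ι → ℤ // ∑ i, (z i : ℝ) ^ 2 ≤ t}

lemma finite_setOf_sum_sq_le (t : ℝ) : {z : ι → ℤ | ∑ i, (z i : ℝ) ^ 2 ≤ t}.Finite := by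
  have hbdd : Bornology.IsBounded {x : EuclideanSpace ℝ ι | ‖x‖ ^ 2 ≤ t} :=
    (Metric.isBounded_closedBall (x := 0) (r := √t)).subset fun x hx => by
      simpa using Real.abs_le_sqrt hx
  have := (ZSpan.setFinite_inter (EuclideanSpace.basisFun ι ℝ).toBasis hbdd).preimage
    intPoint_injective.injOn
  rw [← range_intPoint, Set.preimage_inter_range] at this
  simpa only [Set.preimage_ofPred_eq, norm_intPoint_sq] using this

lemma tendsto_latticeCount_div_rpow [Nonempty ι] :
    Tendsto (fun t => (latticeCount ι t : ℝ) / t ^ ((Fintype.card ι : ℝ) / 2)) atTop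
      (𝓝 (volume.real (Metric.closedBall (0 : EuclideanSpace ℝ ι) 1))) := by
  have hd : Fintype.card ι ≠ 0 := Fintype.card_ne_zero
  have hexp : (0 : ℝ) < (Fintype.card ι : ℝ) / 2 := by
    have := Fintype.card_pos (α := ι)
    positivity
  have hball : {x : EuclideanSpace ℝ ι | x ∈ Set.univ ∧ ‖x‖ ^ finrank ℝ (EuclideanSpace ℝ ι) ≤ 1}
      = Metric.closedBall 0 1 := by
    ext x; simp [pow_le_one_iff_of_nonneg (norm_nonneg x) hd]
  -- Mathlib counts the lattice points in `{‖x‖ ^ d ≤ c}`; we take `c = t ^ (d / 2)`.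
  have key := ZLattice.covolume.tendsto_card_le_div' (intLattice ι) (X := Set.univ)
    (F := fun x => ‖x‖ ^ finrank ℝ (EuclideanSpace ℝ ι)) (fun _ _ _ _ => trivial)
    (fun x r hr => by simp [norm_smul, mul_pow, abs_of_nonneg hr])
    (by rw [hball]; exact Metric.isBounded_closedBall)
    (by rw [hball]; exact measurableSet_closedBall)
    (by rw [hball, frontier_closedBall _ one_ne_zero]; exact Measure.addHaar_sphere _ _ _)
  rw [hball, covolume_intLattice, div_one] at key
  refine (key.comp (tendsto_rpow_atTop hexp)).congr' ?_
  filter_upwards [eventually_ge_atTop 0] with t ht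
  have hset : {x | x ∈ Set.univ ∧ ‖x‖ ^ finrank ℝ (EuclideanSpace ℝ ι)
        ≤ t ^ ((Fintype.card ι : ℝ) / 2)} ∩ (intLattice ι : Set (EuclideanSpace ℝ ι))
      = intPoint '' {z | ∑ i, (z i : ℝ) ^ 2 ≤ t} := by
    rw [← range_intPoint]
    ext x
    simp only [finrank_euclideanSpace, Set.mem_inter_iff, Set.mem_ofPred_eq, Set.mem_univ,
      true_and, Set.mem_range, Set.mem_image]
    constructor
    · rintro ⟨hx, z, rfl⟩
      exact ⟨z, by rwa [pow_le_rpow_half_iff (norm_nonneg _) ht hd, norm_intPoint_sq] at hx, rfl⟩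
    · rintro ⟨z, hz, rfl⟩
      exact ⟨by rwa [pow_le_rpow_half_iff (norm_nonneg _) ht hd, norm_intPoint_sq], z, rfl⟩
  simp only [Function.comp_apply, hset, Nat.card_image_of_injective intPoint_injective]
  rfl

lemma tendsto_latticeCount_sub_div_rpow [Nonempty ι] (a : ℝ) :
    Tendsto (fun t => (latticeCount ι (t - a) : ℝ) / (1 + t) ^ ((Fintype.card ι : ℝ) / 2)) atTop
      (𝓝 (volume.real (Metric.closedBall (0 : EuclideanSpace ℝ ι) 1))) := by
  have hratio : Tendsto (fun t : ℝ => (t - a) / (1 + t)) atTop (𝓝 1) := by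
    have : Tendsto (fun t : ℝ => 1 - (1 + a) / (1 + t)) atTop (𝓝 (1 - 0)) :=
      tendsto_const_nhds.sub <| tendsto_const_nhds.div_atTop <|
        tendsto_atTop_add_const_left _ 1 tendsto_id
    refine (sub_zero (1 : ℝ) ▸ this).congr' ?_
    filter_upwards [eventually_gt_atTop 0] with t ht
    field_simp
    ring
  have := ((tendsto_latticeCount_div_rpow (ι := ι)).comp
    (tendsto_atTop_add_const_right _ (-a) tendsto_id)).mul
    (hratio.rpow_const (p := (Fintype.card ι : ℝ) / 2) (Or.inl one_ne_zero))
  rw [one_rpow, mul_one] at this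
  refine this.congr' ?_
  filter_upwards [eventually_gt_atTop a, eventually_gt_atTop 0] with t hta ht
  simp only [Function.comp_apply, id, ← sub_eq_add_neg]
  rw [div_rpow (by linarith) (by linarith), div_mul_div_cancel₀ (by positivity)]

lemma measureReal_closedBall_zero_one [Nonempty ι] :
    volume.real (Metric.closedBall (0 : EuclideanSpace ℝ ι) 1)
      = 2 * π ^ ((Fintype.card ι : ℝ) / 2) / Gamma ((Fintype.card ι : ℝ) / 2)
        / Fintype.card ι := by
  have hd : (0 : ℝ) < (Fintype.card ι : ℝ) / 2 := by
    have := Fintype.card_pos (α := ι)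
    positivity
  rw [measureReal_def, EuclideanSpace.volume_closedBall, ENNReal.ofReal_one, one_pow, one_mul,
    ENNReal.toReal_ofReal (by positivity), Gamma_add_one hd.ne', sqrt_eq_rpow,
    ← rpow_natCast, ← rpow_mul pi_nonneg]
  field_simp

lemma Equiv.tendsto_succ_mul_rpow [Nonempty ι] (e : ℕ ≃ (ι → ℤ))
    (hmono : Monotone fun k => ∑ i, (e k i : ℝ) ^ 2) :
    Tendsto (fun k : ℕ =>
        ((k : ℝ) + 1) * (1 + ∑ i, (e k i : ℝ) ^ 2) ^ (-(Fintype.card ι : ℝ) / 2))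
      atTop (𝓝 (volume.real (Metric.closedBall (0 : EuclideanSpace ℝ ι) 1))) := by
  have hq : Tendsto (fun k => ∑ i, (e k i : ℝ) ^ 2) atTop atTop :=
    e.tendsto_comp_atTop_of_finite finite_setOf_sum_sq_le
  have hdiv (k : ℕ) : ((k : ℝ) + 1) * (1 + ∑ i, (e k i : ℝ) ^ 2) ^ (-(Fintype.card ι : ℝ) / 2)
      = ((k : ℝ) + 1) / (1 + ∑ i, (e k i : ℝ) ^ 2) ^ ((Fintype.card ι : ℝ) / 2) := by
    rw [neg_div, rpow_neg (by positivity), ← div_eq_mul_inv]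
  simp only [hdiv]
  refine tendsto_of_tendsto_of_tendsto_of_le_of_le
    ((tendsto_latticeCount_sub_div_rpow 1).comp hq) ((tendsto_latticeCount_sub_div_rpow 0).comp hq)
    (fun k => ?_) (fun k => ?_) <;> simp only [Function.comp_apply] <;> gcongr
  · exact (Nat.cast_le.2 ((e.natCard_le_of_lt_apply (g := fun z : ι → ℤ => ∑ i, (z i : ℝ) ^ 2)
      hmono (sub_one_lt _)).trans k.le_succ)).trans_eq (Nat.cast_succ k)
  · rw [sub_zero, ← Nat.cast_succ]
    exact Nat.cast_le.2 (e.succ_le_natCard_le_apply (g := fun z : ι → ℤ => ∑ i, (z i : ℝ) ^ 2)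
      hmono finite_setOf_sum_sq_le k)

end LatticePoints

/-- if `e` enumerates `ℤⁿ` so that `(1 + ‖x‖²)^{-n/2}` is arranged in
decreasing order, then the partial sums `σ_N` of the `N` largest values satisfy
`σ_N / log(N+1) → Ω_n/n` with `Ω_n = 2π^{n/2}/Γ(n/2)`; this computes the Dixmier
trace of `(1 + Δ)^{-n/2}` on the flat `n`-torus. -/
theorem stmt_13 (n : ℕ) (hn : 1 ≤ n) (e : ℕ ≃ (Fin n → ℤ))
    (hanti : Antitone fun k => (1 + ∑ i, ((e k i : ℝ)) ^ 2) ^ (-(n : ℝ) / 2)) :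
    Filter.Tendsto
      (fun N : ℕ =>
        (∑ k ∈ Finset.range N, (1 + ∑ i, ((e k i : ℝ)) ^ 2) ^ (-(n : ℝ) / 2)) /
          Real.log (N + 1))
      Filter.atTop
      (nhds (2 * Real.pi ^ ((n : ℝ) / 2) / Real.Gamma ((n : ℝ) / 2) / n)) := by
  have : Nonempty (Fin n) := ⟨⟨0, hn⟩⟩
  have hmono : Monotone fun k => ∑ i, (e k i : ℝ) ^ 2 := fun j k hjk => by
    have hneg : -(n : ℝ) / 2 < 0 := by
      have : (1 : ℝ) ≤ n := by exact_mod_cast hn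
      linarith
    have := hanti hjk
    rwa [rpow_le_rpow_iff_of_neg (by positivity) (by positivity) hneg, add_le_add_iff_left]
      at this
  have hlim := e.tendsto_succ_mul_rpow hmono
  rw [measureReal_closedBall_zero_one, Fintype.card_fin] at hlim
  refine hlim.sum_div_succ_div_log.congr fun N => ?_
  congr 1
  exact Finset.sum_congr rfl fun k _ => mul_div_cancel_left₀ _ (by positivity)
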